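/- For every free economy with egalitarian Shapley payoffs, there exists α_0 ∈ (0,1) such that for all α ∈ [0, α_0], the game with payoffs ES^α admits a pure strategy Nash equilibrium that is Pareto-efficient (in fact, an equilibrium at which f attains its maximum). -/

import Mathlib

open Finset

noncomputable section

variable {ι : Type*}

/-- Sub-profile of `x` relative to the reference profile `o`:
agents in `S` play their `x`-coordinate, all others play their reference action. -/
def subp [DecidableEq ι] {X : ι → Type*} (o x : ∀ i, X i) (S : Finset ι) : ∀ i, X i :=
  fun j => if j ∈ S then x j else o j

/-- The set of active agents at profile `x` (those deviating from the reference `o`). -/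
def active [DecidableEq ι] [Fintype ι] {X : ι → Type*} [∀ i, DecidableEq (X i)]
    (o x : ∀ i, X i) : Finset ι :=
  Finset.univ.filter fun j => x j ≠ o j

/-- The multivariate Shapley pay scheme. -/
def Sh [DecidableEq ι] [Fintype ι] {X : ι → Type*} [∀ i, DecidableEq (X i)]
    (o : ∀ i, X i) (f : (∀ i, X i) → ℝ) (i : ι) (x : ∀ i, X i) : ℝ :=
  ∑ S ∈ ((active o x).erase i).powerset,
    ((S.card.factorial * ((active o x).card - S.card - 1).factorial : ℝ) /
        ((active o x).card.factorial)) *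
      (f (subp o x (insert i S)) - f (subp o x S))

end

noncomputable section

/-- The egalitarian Shapley pay scheme with meritocratic weight `α`. -/
def ES {ι : Type*} [DecidableEq ι] [Fintype ι] {X : ι → Type*} [∀ i, DecidableEq (X i)]
    (α : ℝ) (o : ∀ i, X i) (f : (∀ i, X i) → ℝ) (i : ι) (x : ∀ i, X i) : ℝ :=
  α * Sh o f i x + (1 - α) * f x / (Fintype.card ι)

end

/-!
The Shapley payoff of agent `i` is the drop of the Hart–Mas-Colell potential `P` when `i`
returns to the reference action, so the game with payoffs `ES α` is an exact potential game
with potential `α n P + (1 - α) f` (up to the factor `n`), and its payoffs sum to `f`. On the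
finite strategy space, a maximiser of `f` that maximises `P` among the maximisers of `f` stays
a maximiser of this potential for all small `α`, hence is a Nash equilibrium; as it maximises
the total payoff `f`, no profile Pareto-improves on it.
-/

open Filter Topology

section Perturbation

variable {β : Type*}

theorem exists_forall_le_and_forall_eq_imp_le [Finite β] [Nonempty β] (f g : β → ℝ) :
    ∃ x, (∀ y, f y ≤ f x) ∧ ∀ y, f y = f x → g y ≤ g x := by
  obtain ⟨x, hx⟩ := Finite.exists_max fun y => toLex (f y, g y)
  exact ⟨x, fun y => (Prod.Lex.toLex_le_toLex'.1 (hx y)).1,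
    fun y => (Prod.Lex.toLex_le_toLex'.1 (hx y)).2⟩

theorem eventually_forall_perturb_le [Finite β] {f g : β → ℝ} {x : β}
    (hf : ∀ y, f y ≤ f x) (hg : ∀ y, f y = f x → g y ≤ g x) :
    ∀ᶠ t in 𝓝[≥] (0 : ℝ), ∀ y, t * g y + (1 - t) * f y ≤ t * g x + (1 - t) * f x := by
  rw [eventually_all]
  intro y
  rcases (hf y).lt_or_eq with hlt | heq
  · have hcont : Continuous fun t : ℝ => t * g y + (1 - t) * f y - (t * g x + (1 - t) * f x) := by
      fun_prop
    have h0 : (fun t : ℝ => t * g y + (1 - t) * f y - (t * g x + (1 - t) * f x)) 0 < 0 := by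
      simpa using hlt
    filter_upwards [nhdsWithin_le_nhds (hcont.continuousAt.eventually_lt continuousAt_const h0)]
      with t ht
    exact (sub_neg.1 ht).le
  · filter_upwards [self_mem_nhdsWithin] with t (ht : 0 ≤ t)
    rw [heq]
    gcongr
    exact hg y heq

theorem exists_pos_lt_one_forall_of_eventually_nhdsGE {p : ℝ → Prop}
    (h : ∀ᶠ t in 𝓝[≥] (0 : ℝ), p t) : ∃ ε, 0 < ε ∧ ε < 1 ∧ ∀ t, 0 ≤ t → t ≤ ε → p t := by
  obtain ⟨u, hu, hsub⟩ := mem_nhdsGE_iff_exists_Icc_subset.1 h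
  exact ⟨min u (1 / 2), lt_min hu one_half_pos, (min_le_right _ _).trans_lt one_half_lt_one,
    fun t ht0 htε => hsub ⟨ht0, htε.trans (min_le_left _ _)⟩⟩

end Perturbation

theorem Finset.sum_sum_powerset_erase {α M : Type*} [DecidableEq α] [AddCommMonoid M]
    (A : Finset α) (g : Finset α → M) :
    ∑ i ∈ A, ∑ S ∈ (A.erase i).powerset, g S = ∑ S ∈ A.powerset, (#A - #S) • g S := by
  rw [sum_comm' (t' := A.powerset) (s' := (A \ ·))]
  · refine sum_congr rfl fun S hS => ?_
    rw [sum_const, card_sdiff_of_subset (mem_powerset.1 hS)]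
  · intro i S
    simp only [mem_powerset, subset_erase, mem_sdiff]
    tauto

/-- Coefficients of the Hart–Mas-Colell potential of an `a`-player game. The empty coalition,
whose worth is `f o = 0`, gets `0`; the `if` keeps the truncated `(0 - 1)!` out. -/
noncomputable def shapleyCoeff (s a : ℕ) : ℝ :=
  if s = 0 then 0 else ((s - 1).factorial * (a - s).factorial : ℝ) / a.factorial

theorem shapleyCoeff_succ (s a : ℕ) :
    shapleyCoeff (s + 1) a = (s.factorial * (a - s - 1).factorial : ℝ) / a.factorial := by
  simp [shapleyCoeff, Nat.sub_sub]

theorem shapleyCoeff_succ_add (t u : ℕ) :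
    shapleyCoeff (t + 1) (t + 1 + u) = (t.factorial * u.factorial : ℝ) / (t + 1 + u).factorial := by
  simp [shapleyCoeff]

theorem shapleyCoeff_sub_shapleyCoeff {s b : ℕ} (hs : 1 ≤ s) (hsb : s ≤ b) :
    shapleyCoeff s (b + 1) - shapleyCoeff s b = -shapleyCoeff (s + 1) (b + 1) := by
  obtain ⟨t, rfl⟩ := Nat.exists_eq_add_of_le' hs
  obtain ⟨u, rfl⟩ := Nat.exists_eq_add_of_le hsb
  rw [shapleyCoeff_succ_add, show t + 1 + u + 1 = t + 1 + (u + 1) from rfl, shapleyCoeff_succ_add,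
    show t + 1 + (u + 1) = t + 1 + 1 + u by ring, shapleyCoeff_succ_add,
    show t + 1 + 1 + u = t + 1 + u + 1 by ring, Nat.factorial_succ (t + 1 + u),
    Nat.factorial_succ u, Nat.factorial_succ t]
  push_cast
  field_simp
  ring

theorem card_mul_shapleyCoeff_of_lt {s a : ℕ} (hsa : s < a) :
    (a : ℝ) * shapleyCoeff s a = ((a - s : ℕ) : ℝ) * shapleyCoeff s (a - 1) := by
  rcases Nat.eq_zero_or_eq_succ_pred s with rfl | hs
  · simp [shapleyCoeff]
  obtain ⟨t, rfl⟩ : ∃ t, s = t + 1 := ⟨_, hs⟩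
  obtain ⟨u, rfl⟩ := Nat.exists_eq_add_of_lt hsa
  rw [Nat.add_sub_cancel, show t + 1 + u + 1 - (t + 1) = u + 1 by omega, shapleyCoeff_succ_add,
    show t + 1 + u + 1 = t + 1 + (u + 1) from rfl, shapleyCoeff_succ_add,
    show t + 1 + (u + 1) = t + 1 + u + 1 from rfl, Nat.factorial_succ (t + 1 + u),
    Nat.factorial_succ u]
  push_cast
  field_simp

theorem card_mul_shapleyCoeff_self {a : ℕ} (ha : 1 ≤ a) : (a : ℝ) * shapleyCoeff a a = 1 := by
  obtain ⟨t, rfl⟩ := Nat.exists_eq_add_of_le' ha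
  rw [show shapleyCoeff (t + 1) (t + 1) = _ from shapleyCoeff_succ_add t 0, Nat.factorial_succ,
    Nat.factorial_zero]
  push_cast
  field_simp

section Profiles

variable {ι : Type*} [DecidableEq ι] {X : ι → Type*} (o x : ∀ i, X i)

theorem subp_empty : subp o x ∅ = o := by
  funext j
  simp [subp]

theorem subp_update_of_notMem {i : ι} (y : X i) {S : Finset ι} (hS : i ∉ S) :
    subp o (Function.update x i y) S = subp o x S := by
  funext j
  by_cases hj : j = i
  · subst hj
    simp [subp, hS]
  · simp [subp, hj]

theorem subp_insert_of_eq {i : ι} (h : x i = o i) (S : Finset ι) :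
    subp o x (insert i S) = subp o x S := by
  funext j
  by_cases hj : j = i
  · subst hj
    simp [subp, h]
  · simp [subp, hj]

variable [Fintype ι] [∀ i, DecidableEq (X i)]

theorem subp_active : subp o x (active o x) = x := by
  funext j
  by_cases h : x j = o j <;> simp [subp, active, h]

theorem active_update_self (i : ι) :
    active o (Function.update x i (o i)) = (active o x).erase i := by
  ext j
  by_cases h : j = i
  · subst h
    simp [active]
  · simp [active, h]

end Profiles

section Potential

variable {ι : Type*} [DecidableEq ι] [Fintype ι] {X : ι → Type*} [∀ i, DecidableEq (X i)]
  (o x : ∀ i, X i) (f : (∀ i, X i) → ℝ)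

/-- The Hart–Mas-Colell potential of the coalitional game `S ↦ f (subp o x S)` on the active
agents of `x`. -/
noncomputable def shapleyPotential : ℝ :=
  ∑ S ∈ (active o x).powerset, shapleyCoeff #S #(active o x) * f (subp o x S)

theorem shapleyPotential_update_self (i : ι) :
    shapleyPotential o (Function.update x i (o i)) f =
      ∑ S ∈ ((active o x).erase i).powerset,
        shapleyCoeff #S #((active o x).erase i) * f (subp o x S) := by
  rw [shapleyPotential, active_update_self]
  refine sum_congr rfl fun S hS => ?_
  rw [subp_update_of_notMem o x _ fun hi => by simpa using mem_powerset.1 hS hi]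

theorem Sh_eq_zero_of_eq {i : ι} (hi : x i = o i) : Sh o f i x = 0 :=
  sum_eq_zero fun S _ => by rw [subp_insert_of_eq o x hi, sub_self, mul_zero]

theorem Sh_eq_shapleyPotential_sub (hf : f o = 0) (i : ι) :
    Sh o f i x = shapleyPotential o x f - shapleyPotential o (Function.update x i (o i)) f := by
  by_cases hi : x i = o i
  · rw [← hi, Function.update_eq_self, sub_self, Sh_eq_zero_of_eq o x f hi]
  set A := active o x with hA
  have hiA : i ∈ A := by simpa [hA, active] using hi
  have hiB : i ∉ A.erase i := notMem_erase i A
  have hcard : #A = #(A.erase i) + 1 := (card_erase_add_one hiA).symm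
  rw [shapleyPotential_update_self, shapleyPotential, ← hA, ← insert_erase hiA,
    sum_powerset_insert hiB, insert_erase hiA, Sh, ← hA, add_sub_right_comm,
    ← sum_sub_distrib, ← sum_add_distrib]
  refine sum_congr rfl fun S hS => ?_
  have hiS : i ∉ S := fun h => hiB (mem_powerset.1 hS h)
  rw [card_insert_of_notMem hiS, ← shapleyCoeff_succ]
  rcases Nat.eq_zero_or_pos #S with hS0 | hS0
  · rw [card_eq_zero.1 hS0, subp_empty, hf]
    ring
  · have hsb : #S ≤ #(A.erase i) := card_le_card (mem_powerset.1 hS)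
    have hcoeff := shapleyCoeff_sub_shapleyCoeff hS0 hsb
    rw [← hcard] at hcoeff
    linear_combination -f (subp o x S) * hcoeff

theorem sum_Sh (hf : f o = 0) : ∑ i, Sh o f i x = f x := by
  set A := active o x with hA
  have hsupp : ∑ i, Sh o f i x = ∑ i ∈ A, Sh o f i x :=
    (sum_subset (subset_univ A) fun i _ hi =>
      Sh_eq_zero_of_eq o x f (by simpa [hA, active] using hi)).symm
  have hremove : ∀ i ∈ A, Sh o f i x = shapleyPotential o x f -
      ∑ S ∈ (A.erase i).powerset, shapleyCoeff #S (#A - 1) * f (subp o x S) := by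
    intro i hi
    rw [Sh_eq_shapleyPotential_sub o x f hf, shapleyPotential_update_self, ← hA,
      card_erase_of_mem hi]
  rw [hsupp, sum_congr rfl hremove, sum_sub_distrib, sum_sum_powerset_erase,
    sum_const, nsmul_eq_mul, shapleyPotential, ← hA, mul_sum,
    ← sum_sub_distrib, sum_eq_single_of_mem A (mem_powerset_self A)]
  · rw [hA, subp_active, ← hA, Nat.sub_self, zero_smul, sub_zero, ← mul_assoc]
    rcases Nat.eq_zero_or_pos #A with hA0 | hA0
    · rw [← subp_active o x, ← hA, card_eq_zero.1 hA0, subp_empty, hf, mul_zero]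
    · rw [card_mul_shapleyCoeff_self hA0, one_mul]
  · intro S hS hSA
    have hlt : #S < #A := card_lt_card (lt_of_le_of_ne (mem_powerset.1 hS) hSA)
    rw [nsmul_eq_mul, ← mul_assoc, ← mul_assoc, card_mul_shapleyCoeff_of_lt hlt, sub_self]

end Potential

section Game

variable {ι : Type*} [DecidableEq ι] [Fintype ι] {X : ι → Type*} [∀ i, DecidableEq (X i)]
  {o : ∀ i, X i} {f : (∀ i, X i) → ℝ}

noncomputable def esPotential (α : ℝ) (o : ∀ i, X i) (f : (∀ i, X i) → ℝ) (x : ∀ i, X i) : ℝ :=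
  α * (Fintype.card ι * shapleyPotential o x f) + (1 - α) * f x

theorem ES_update_sub_ES (hf : f o = 0) (α : ℝ) (x : ∀ i, X i) (i : ι) (y : X i) :
    ES α o f i (Function.update x i y) - ES α o f i x =
      (esPotential α o f (Function.update x i y) - esPotential α o f x) / Fintype.card ι := by
  have : Nonempty ι := ⟨i⟩
  have hn : (Fintype.card ι : ℝ) ≠ 0 := Nat.cast_ne_zero.2 Fintype.card_ne_zero
  simp only [ES, esPotential, Sh_eq_shapleyPotential_sub _ _ f hf, Function.update_idem]
  field_simp
  ring

theorem sum_ES [Nonempty ι] (hf : f o = 0) (α : ℝ) (x : ∀ i, X i) : ∑ i, ES α o f i x = f x := by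
  have hn : (Fintype.card ι : ℝ) ≠ 0 := Nat.cast_ne_zero.2 Fintype.card_ne_zero
  simp only [ES, sum_add_distrib, ← mul_sum, sum_Sh _ _ _ hf, sum_const,
    card_univ, nsmul_eq_mul]
  field_simp
  ring

theorem not_exists_ES_paretoImprovement (hf : f o = 0) (α : ℝ) {x : ∀ i, X i}
    (hx : ∀ y, f y ≤ f x) :
    ¬ ∃ y : ∀ i, X i, (∀ j, ES α o f j x ≤ ES α o f j y) ∧ ∃ j, ES α o f j x < ES α o f j y := by
  rintro ⟨y, hle, j, hlt⟩
  have : Nonempty ι := ⟨j⟩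
  have hsum := sum_lt_sum (fun k _ => hle k) ⟨j, mem_univ j, hlt⟩
  rw [sum_ES hf, sum_ES hf] at hsum
  exact (hx y).not_gt hsum

end Game

/-- There is a threshold α₀ ∈ (0,1) such that for every α ∈ [0, α₀] the
egalitarian Shapley game has a pure strategy Nash equilibrium at which f attains its
maximum, hence a Pareto-efficient equilibrium. -/
theorem stmt_10 {ι : Type*} [DecidableEq ι] [Fintype ι] {X : ι → Type*}
    [∀ i, Fintype (X i)] [∀ i, DecidableEq (X i)]
    (o : ∀ i, X i) (f : (∀ i, X i) → ℝ) (hf : f o = 0) :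
    ∃ α₀ : ℝ, 0 < α₀ ∧ α₀ < 1 ∧ ∀ α : ℝ, 0 ≤ α → α ≤ α₀ →
      ∃ xs : ∀ i, X i,
        (∀ i : ι, ∀ y : X i, ES α o f i (Function.update xs i y) ≤ ES α o f i xs) ∧
        (∀ y : ∀ i, X i, f y ≤ f xs) ∧
        ¬ ∃ y : ∀ i, X i, (∀ j : ι, ES α o f j xs ≤ ES α o f j y) ∧
          ∃ j : ι, ES α o f j xs < ES α o f j y := by
  have : Nonempty (∀ i, X i) := ⟨o⟩
  obtain ⟨xs, hfmax, hPmax⟩ := exists_forall_le_and_forall_eq_imp_le f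
    fun y => (Fintype.card ι : ℝ) * shapleyPotential o y f
  obtain ⟨α₀, hα₀, hα₀1, hstable⟩ :=
    exists_pos_lt_one_forall_of_eventually_nhdsGE (eventually_forall_perturb_le hfmax hPmax)
  refine ⟨α₀, hα₀, hα₀1, fun α hα hαα₀ => ⟨xs, fun i y => ?_, hfmax,
    not_exists_ES_paretoImprovement hf α hfmax⟩⟩
  rw [← sub_nonpos, ES_update_sub_ES hf]
  exact div_nonpos_of_nonpos_of_nonneg
    (sub_nonpos.2 (hstable α hα hαα₀ (Function.update xs i y))) (Nat.cast_nonneg _)
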